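/- arXiv:2302.04695 — 3 statements merged into one kernel-verified Lean document; each statement's English description precedes it below -/
import Mathlib

section
/- Let K = K_{n_1,...,n_k} be the complete k-partite graph with part sizes n_1,...,n_k and n = n_1 + ... + n_k vertices. Then the characteristic polynomial of its adjacency matrix is Φ_K(λ) = λ^{n-k} ( ∏_{i=1}^k (λ + n_i) - ∑_{i=1}^k n_i ∏_{j≠i} (λ + n_j) ). -/
open Finset

noncomputable def adjMat {V : Type*} [Fintype V] [DecidableEq V] (G : SimpleGraph V) :
    Matrix V V ℝ :=
  letI := Classical.decRel G.Adj
  G.adjMatrix ℝ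

/-- The spectral radius (largest adjacency eigenvalue) of a finite graph. -/
noncomputable def specRad {V : Type*} [Fintype V] [DecidableEq V] (G : SimpleGraph V) : ℝ :=
  sSup (spectrum ℝ (adjMat G))

/-- `G` contains no matching with `m` edges. -/
def MFree {V : Type*} (G : SimpleGraph V) (m : ℕ) : Prop :=
  ¬ ∃ M : SimpleGraph.Subgraph G, M.IsMatching ∧ M.edgeSet.ncard = m

/-!
Let `P` be the vertex–part incidence matrix of `K_{n_1,…,n_k}` and `Q i w = [w ∉ part i]`. Then
`A = P Q`, so `χ_A = X^(n-k) χ_{QP}` (Sylvester), and `QP` is the `k × k` quotient matrix with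
entries `[i ≠ j] n_j`. Its characteristic matrix is `diag(X + n_i) - 𝟙 nᵀ`, a diagonal matrix minus a
rank-one matrix, whose determinant the matrix determinant lemma gives at every point where the
diagonal is invertible.
-/

open Matrix Polynomial

theorem adjMat_eq_adjMatrix {V : Type*} [Fintype V] [DecidableEq V] (G : SimpleGraph V)
    [DecidableRel G.Adj] : adjMat G = G.adjMatrix ℝ := by
  unfold adjMat
  congr

namespace Matrix

variable {ι : Type*} [Fintype ι] [DecidableEq ι]

theorem det_diagonal_add_replicateCol_mul_replicateRow {K : Type*} [Field K] {d : ι → K}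
    (hd : ∀ i, d i ≠ 0) (u v : ι → K) :
    (diagonal d + replicateCol Unit u * replicateRow Unit v).det =
      ∏ i, d i + ∑ i, u i * v i * ∏ j ∈ univ.erase i, d j := by
  have hfactor : diagonal d + replicateCol Unit u * replicateRow Unit v =
      diagonal d * (1 + replicateCol Unit (u / d) * replicateRow Unit v) := by
    have hcol : diagonal d * replicateCol Unit (u / d) = replicateCol Unit u := by
      ext i
      simp [mul_div_cancel₀ _ (hd i)]
    rw [Matrix.mul_add, Matrix.mul_one, ← Matrix.mul_assoc, hcol]
  rw [hfactor, det_mul, det_diagonal, det_one_add_replicateCol_mul_replicateRow, mul_add, mul_one,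
    dotProduct, mul_sum]
  congr 1
  refine sum_congr rfl fun i _ => ?_
  have := hd i
  rw [← mul_prod_erase univ d (mem_univ i), Pi.div_apply]
  field_simp

def completeMultipartiteQuotient {R : Type*} [Zero R] (m : ι → R) : Matrix ι ι R :=
  of fun i j => if i = j then 0 else m j

theorem charpoly_completeMultipartiteQuotient {K : Type*} [Field K] [Infinite K] (m : ι → K) :
    (completeMultipartiteQuotient m).charpoly =
      ∏ i, (X + C (m i)) - ∑ i, C (m i) * ∏ j ∈ univ.erase i, (X + C (m j)) := by
  refine eq_of_infinite_eval_eq _ _ ((Set.finite_range fun i => -m i).infinite_compl.mono ?_)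
  intro x hx
  have hd : ∀ i, x + m i ≠ 0 := fun i h => hx ⟨i, (eq_neg_of_add_eq_zero_left h).symm⟩
  have hsplit : scalar ι x - completeMultipartiteQuotient m =
      diagonal (fun i => x + m i) +
        replicateCol Unit (fun _ : ι => (-1 : K)) * replicateRow Unit m := by
    ext i j
    by_cases h : i = j <;> simp [completeMultipartiteQuotient, mul_apply, h]
  simp only [Set.mem_ofPred_eq, eval_charpoly, hsplit,
    det_diagonal_add_replicateCol_mul_replicateRow hd, eval_sub, eval_prod, eval_finsetSum,
    eval_mul, eval_add, eval_X, eval_C]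
  simp [sub_eq_add_neg]

end Matrix

namespace SimpleGraph

variable {ι : Type*} {V : ι → Type*} [Fintype ι] [DecidableEq ι] {R : Type*} [CommRing R]

theorem adjMatrix_completeMultipartiteGraph_eq_mul
    [DecidableRel (completeMultipartiteGraph V).Adj] :
    (completeMultipartiteGraph V).adjMatrix R =
      of (fun (v : Σ i, V i) (i : ι) => if v.1 = i then (1 : R) else 0) *
        of fun (i : ι) (w : Σ i, V i) => if i = w.1 then (0 : R) else 1 := by
  ext v w
  simp only [mul_apply, of_apply, ite_mul, one_mul, zero_mul, sum_ite_eq, mem_univ, if_true,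
    adjMatrix_apply, comap_adj, top_adj, ite_not]

variable [∀ i, Fintype (V i)]

theorem mul_eq_completeMultipartiteQuotient :
    of (fun (i : ι) (w : Σ i, V i) => if i = w.1 then (0 : R) else 1) *
        of (fun (v : Σ i, V i) (i : ι) => if v.1 = i then (1 : R) else 0) =
      completeMultipartiteQuotient fun i => (Fintype.card (V i) : R) := by
  ext i j
  by_cases h : i = j <;>
    simp [mul_apply, completeMultipartiteQuotient, ← univ_sigma_univ, sum_sigma, h]

theorem charpoly_adjMatrix_completeMultipartiteGraph [∀ i, DecidableEq (V i)]
    [DecidableRel (completeMultipartiteGraph V).Adj] (hV : ∀ i, Nonempty (V i)) :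
    ((completeMultipartiteGraph V).adjMatrix R).charpoly =
      X ^ (Fintype.card (Σ i, V i) - Fintype.card ι) *
        (completeMultipartiteQuotient fun i => (Fintype.card (V i) : R)).charpoly := by
  have hcard : Fintype.card ι ≤ Fintype.card (Σ i, V i) :=
    Fintype.card_le_of_injective (fun i => ⟨i, Classical.arbitrary (V i)⟩)
      fun _ _ h => congrArg Sigma.fst h
  rw [adjMatrix_completeMultipartiteGraph_eq_mul, charpoly_mul_comm_of_le _ _ hcard,
    mul_eq_completeMultipartiteQuotient]

end SimpleGraph

open Polynomial in
/-- The characteristic polynomial of the adjacency matrix of the complete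
`k`-partite graph with part sizes `n 0, …, n (k-1)`. -/
theorem charpoly_completeMultipartite (k : ℕ) (n : Fin k → ℕ) (hn : ∀ i, 1 ≤ n i) :
    (adjMat (SimpleGraph.completeMultipartiteGraph (fun i => Fin (n i)))).charpoly =
      X ^ ((∑ i, n i) - k) *
        (∏ i, (X + C (n i : ℝ)) -
          ∑ i, C (n i : ℝ) * ∏ j ∈ Finset.univ.erase i, (X + C (n j : ℝ))) := by
  rw [adjMat_eq_adjMatrix, SimpleGraph.charpoly_adjMatrix_completeMultipartiteGraph
    fun i => Fin.pos_iff_nonempty.mp (hn i), charpoly_completeMultipartiteQuotient]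
  simp only [Fintype.card_sigma, Fintype.card_fin]
end

section
/- Let G be a graph and S, T two disjoint independent sets such that all vertices of S have common neighborhood N(S), all vertices of T have common neighborhood N(T), and there are no edges between S and T. Let G_{S→T} be the graph obtained from G by deleting all edges between S and N(S) and adding all edges between S and N(T), and define G_{T→S} symmetrically. Then λ(G_{S→T}) ≥ λ(G) or λ(G_{T→S}) ≥ λ(G). -/
/-!
Let `A` be the adjacency matrix of `G` and `x ≥ 0` a unit vector with `xᵀ A x = λ(G)` (the
entrywise absolute value of a top eigenvector). Because all of `S` shares the neighbourhood
`N(S)`, the adjacency matrix of `G_{S→T}` is `A + 1_S bᵀ + b 1_Sᵀ` with `b = 1_{N(T)} - 1_{N(S)}`,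
so switching `S` changes the quadratic form at `x` by `2 x(S) (x(N(T)) - x(N(S)))`, while
switching `T` changes it by `2 x(T) (x(N(S)) - x(N(T)))`, where `x(U) = ∑_{u ∈ U} x_u`. As
`x ≥ 0`, one of the two changes is nonnegative, and the Rayleigh bound `xᵀ B x ≤ λ(H)` for the
adjacency matrix `B` of the switched graph `H` concludes.
-/

open Finset

/-- The graph obtained from `G` by rewiring every vertex of the independent set `S`:
all edges from `S` to the rest of the graph are deleted and replaced by all edges from `S`
to `N` (edges not incident to `S` are unchanged). -/
def switchG {V : Type*} (G : SimpleGraph V) (S N : Set V) : SimpleGraph V where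
  Adj u v := (u ∉ S ∧ v ∉ S ∧ G.Adj u v) ∨ (u ∈ S ∧ v ∉ S ∧ v ∈ N) ∨ (v ∈ S ∧ u ∉ S ∧ u ∈ N)
  symm := by
    constructor
    intro u v h
    rcases h with ⟨h1, h2, h3⟩ | ⟨h1, h2, h3⟩ | ⟨h1, h2, h3⟩
    · exact Or.inl ⟨h2, h1, h3.symm⟩
    · exact Or.inr (Or.inr ⟨h1, h2, h3⟩)
    · exact Or.inr (Or.inl ⟨h1, h2, h3⟩)
  loopless := by
    constructor
    intro u h
    rcases h with ⟨_, _, h⟩ | ⟨h1, h2, _⟩ | ⟨h1, h2, _⟩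
    · exact G.loopless.irrefl u h
    · exact h2 h1
    · exact h2 h1

theorem switchG_empty {V : Type*} (G : SimpleGraph V) (N : Set V) : switchG G ∅ N = G := by
  ext u v
  simp [switchG]

open Matrix

namespace Matrix

variable {n : Type*} [Fintype n]

theorem dotProduct_mulVec_le_abs {A : Matrix n n ℝ} (hA : ∀ i j, 0 ≤ A i j) (x : n → ℝ) :
    x ⬝ᵥ A *ᵥ x ≤ |x| ⬝ᵥ A *ᵥ |x| := by
  simp only [dotProduct, mulVec, Finset.mul_sum, Pi.abs_apply]
  refine Finset.sum_le_sum fun i _ => Finset.sum_le_sum fun j _ => ?_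
  calc x i * (A i j * x j) ≤ |x i * (A i j * x j)| := le_abs_self _
    _ = |x i| * (A i j * |x j|) := by rw [abs_mul, abs_mul, abs_of_nonneg (hA i j)]

namespace IsHermitian

variable [DecidableEq n] {A : Matrix n n ℝ}

theorem dotProduct_mulVec_le_sSup_spectrum_mul (hA : A.IsHermitian) (x : n → ℝ) :
    x ⬝ᵥ A *ᵥ x ≤ sSup (spectrum ℝ A) * (x ⬝ᵥ x) := by
  set c := sSup (spectrum ℝ A)
  have hpsd : (algebraMap ℝ (Matrix n n ℝ) c - A).PosSemidef := by
    refine posSemidef_iff_isHermitian_and_spectrum_nonneg.2 ⟨?_, ?_⟩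
    · rw [Algebra.algebraMap_eq_smul_one]
      exact (isHermitian_one.smul (IsSelfAdjoint.all c)).sub hA
    · rw [← spectrum.singleton_sub_eq]
      rintro _ ⟨_, rfl, z, hz, rfl⟩
      exact sub_nonneg.2 (le_csSup finite_real_spectrum.bddAbove hz)
  simpa [Algebra.algebraMap_eq_smul_one, sub_mulVec, dotProduct_sub, smul_mulVec] using
    hpsd.dotProduct_mulVec_nonneg x

theorem exists_dotProduct_mulVec_eq_sSup_spectrum [Nonempty n] (hA : A.IsHermitian) :
    ∃ x : n → ℝ, x ⬝ᵥ x = 1 ∧ x ⬝ᵥ A *ᵥ x = sSup (spectrum ℝ A) := by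
  obtain ⟨i, hi⟩ : sSup (spectrum ℝ A) ∈ Set.range hA.eigenvalues := by
    rw [← hA.spectrum_real_eq_range_eigenvalues]
    refine Set.Nonempty.csSup_mem ?_ finite_real_spectrum
    rw [hA.spectrum_real_eq_range_eigenvalues]
    exact Set.range_nonempty _
  set v := hA.eigenvectorBasis i
  have hv : ⇑v ⬝ᵥ ⇑v = 1 := by
    have : inner ℝ v v = 1 := by
      rw [real_inner_self_eq_norm_sq, hA.eigenvectorBasis.orthonormal.1 i, one_pow]
    rwa [EuclideanSpace.inner_eq_star_dotProduct, star_trivial] at this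
  refine ⟨v, hv, ?_⟩
  rw [hA.mulVec_eigenvectorBasis, dotProduct_smul, hv, hi, smul_eq_mul, mul_one]

end IsHermitian

end Matrix

section Graph

variable {V : Type*} [Fintype V] [DecidableEq V]

open Classical in
theorem adjMat_apply (G : SimpleGraph V) (u v : V) :
    adjMat G u v = if G.Adj u v then 1 else 0 := by
  simp [adjMat]

theorem adjMat_nonneg (G : SimpleGraph V) (u v : V) : 0 ≤ adjMat G u v := by
  classical
  rw [adjMat_apply]
  split_ifs <;> norm_num

theorem isHermitian_adjMat (G : SimpleGraph V) : (adjMat G).IsHermitian := by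
  classical
  exact isHermitian_iff_isSymm.2 G.isSymm_adjMatrix

theorem dotProduct_mulVec_adjMat_le_specRad_mul (G : SimpleGraph V) (x : V → ℝ) :
    x ⬝ᵥ adjMat G *ᵥ x ≤ specRad G * (x ⬝ᵥ x) :=
  (isHermitian_adjMat G).dotProduct_mulVec_le_sSup_spectrum_mul x

theorem exists_nonneg_specRad_le_dotProduct_mulVec_adjMat [Nonempty V] (G : SimpleGraph V) :
    ∃ x : V → ℝ, 0 ≤ x ∧ x ⬝ᵥ x = 1 ∧ specRad G ≤ x ⬝ᵥ adjMat G *ᵥ x := by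
  obtain ⟨x, hx1, hx⟩ := (isHermitian_adjMat G).exists_dotProduct_mulVec_eq_sSup_spectrum
  refine ⟨|x|, abs_nonneg x, ?_, ?_⟩
  · simpa only [dotProduct, Pi.abs_apply, abs_mul_abs_self] using hx1
  · exact hx.symm.le.trans (dotProduct_mulVec_le_abs (adjMat_nonneg G) x)

theorem adjMat_switchG (G : SimpleGraph V) {S NS N : Set V}
    (hNS : ∀ u ∈ S, G.neighborSet u = NS) (hN : Disjoint N S) :
    adjMat (switchG G S N) = adjMat G + vecMulVec (S.indicator 1) (N.indicator 1 - NS.indicator 1)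
      + vecMulVec (N.indicator 1 - NS.indicator 1) (S.indicator 1) := by
  classical
  have hadj : ∀ u ∈ S, ∀ v, G.Adj u v ↔ v ∈ NS := fun u hu v => by rw [← hNS u hu]; rfl
  -- `v ∈ S ∩ NS` would make `v` adjacent to itself.
  have hNS_S : ∀ v ∈ S, v ∉ NS := fun v hv h => G.loopless.irrefl v ((hadj v hv v).2 h)
  ext u v
  by_cases hu : u ∈ S <;> by_cases hv : v ∈ S
  · simp [adjMat_apply, switchG, vecMulVec_apply, hu, hv, hNS_S, hN.notMem_of_mem_right,
      hadj u hu v]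
  · by_cases hvN : v ∈ N <;> by_cases hvNS : v ∈ NS <;>
      simp [adjMat_apply, switchG, vecMulVec_apply, hu, hv, hadj u hu v, hvN, hvNS]
  · by_cases huN : u ∈ N <;> by_cases huNS : u ∈ NS <;>
      simp [adjMat_apply, switchG, vecMulVec_apply, hu, hv, hadj v hv u, G.adj_comm u v, huN, huNS]
  · simp [adjMat_apply, switchG, vecMulVec_apply, hu, hv]

theorem dotProduct_mulVec_adjMat_switchG (G : SimpleGraph V) {S NS N : Set V}
    (hNS : ∀ u ∈ S, G.neighborSet u = NS) (hN : Disjoint N S) (x : V → ℝ) :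
    x ⬝ᵥ adjMat (switchG G S N) *ᵥ x = x ⬝ᵥ adjMat G *ᵥ x
      + 2 * (S.indicator 1 ⬝ᵥ x) * ((N.indicator 1 - NS.indicator 1) ⬝ᵥ x) := by
  rw [adjMat_switchG G hNS hN, add_mulVec, add_mulVec, dotProduct_add, dotProduct_add,
    vecMulVec_mulVec, vecMulVec_mulVec]
  simp only [op_smul_eq_smul, dotProduct_smul, smul_eq_mul]
  rw [dotProduct_comm x (S.indicator 1), dotProduct_comm x (N.indicator 1 - NS.indicator 1)]
  ring

theorem specRad_le_specRad_switchG (G : SimpleGraph V) {S NS N : Set V}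
    (hNS : ∀ u ∈ S, G.neighborSet u = NS) (hN : Disjoint N S) {x : V → ℝ} (hx0 : 0 ≤ x)
    (hx1 : x ⬝ᵥ x = 1) (hx : specRad G ≤ x ⬝ᵥ adjMat G *ᵥ x)
    (hNx : NS.indicator 1 ⬝ᵥ x ≤ N.indicator 1 ⬝ᵥ x) :
    specRad G ≤ specRad (switchG G S N) := by
  have hSx : 0 ≤ S.indicator 1 ⬝ᵥ x :=
    dotProduct_nonneg_of_nonneg (Set.indicator_nonneg fun _ _ => zero_le_one) hx0
  have hdx : 0 ≤ (N.indicator 1 - NS.indicator 1) ⬝ᵥ x := by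
    rw [sub_dotProduct]
    exact sub_nonneg.2 hNx
  calc specRad G ≤ x ⬝ᵥ adjMat G *ᵥ x := hx
    _ ≤ x ⬝ᵥ adjMat (switchG G S N) *ᵥ x := by
      rw [dotProduct_mulVec_adjMat_switchG G hNS hN]
      nlinarith [mul_nonneg hSx hdx]
    _ ≤ specRad (switchG G S N) := by
      simpa [hx1] using dotProduct_mulVec_adjMat_le_specRad_mul (switchG G S N) x

end Graph

theorem switch_specRad_ge_general {V : Type*} [Fintype V] [DecidableEq V] (G : SimpleGraph V)
    (S T NS NT : Set V)
    (hNS : ∀ u ∈ S, G.neighborSet u = NS)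
    (hNT : ∀ v ∈ T, G.neighborSet v = NT)
    (hST : ∀ u ∈ S, ∀ v ∈ T, ¬ G.Adj u v) :
    specRad G ≤ specRad (switchG G S NT) ∨ specRad G ≤ specRad (switchG G T NS) := by
  -- For empty `S` or `T` the corresponding neighbourhood is unconstrained, but that switch is trivial.
  rcases T.eq_empty_or_nonempty with rfl | ⟨t, ht⟩
  · exact Or.inr (by rw [switchG_empty])
  rcases S.eq_empty_or_nonempty with rfl | ⟨s, hs⟩
  · exact Or.inl (by rw [switchG_empty])
  have : Nonempty V := ⟨s⟩
  have hNTS : Disjoint NT S := Set.disjoint_left.2 fun v hvNT hvS =>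
    hST v hvS t ht (hNT t ht ▸ hvNT : v ∈ G.neighborSet t).symm
  have hNST : Disjoint NS T := Set.disjoint_left.2 fun v hvNS hvT =>
    hST s hs v hvT (hNS s hs ▸ hvNS : v ∈ G.neighborSet s)
  obtain ⟨x, hx0, hx1, hx⟩ := exists_nonneg_specRad_le_dotProduct_mulVec_adjMat G
  rcases le_total (NS.indicator 1 ⬝ᵥ x) (NT.indicator 1 ⬝ᵥ x) with hNx | hNx
  · exact Or.inl (specRad_le_specRad_switchG G hNS hNTS hx0 hx1 hx hNx)
  · exact Or.inr (specRad_le_specRad_switchG G hNT hNST hx0 hx1 hx hNx)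

/-- Let `S`, `T` be disjoint independent sets of `G`, all vertices of `S` (resp. `T`)
having the same neighborhood `NS` (resp. `NT`), with no edges between `S` and `T`.
Then switching `S → T` or switching `T → S` does not decrease the spectral radius. -/
theorem switch_specRad_ge {V : Type*} [Fintype V] [DecidableEq V] (G : SimpleGraph V)
    (S T NS NT : Set V) (hdisj : Disjoint S T)
    (hSind : ∀ u ∈ S, ∀ v ∈ S, ¬ G.Adj u v)
    (hTind : ∀ u ∈ T, ∀ v ∈ T, ¬ G.Adj u v)
    (hNS : ∀ u ∈ S, G.neighborSet u = NS)
    (hNT : ∀ v ∈ T, G.neighborSet v = NT)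
    (hST : ∀ u ∈ S, ∀ v ∈ T, ¬ G.Adj u v) :
    specRad G ≤ specRad (switchG G S NT) ∨ specRad G ≤ specRad (switchG G T NS) :=
  switch_specRad_ge_general G S T NS NT hNS hNT hST
end

section
/- Let G̃ = K_{b_1,...,b_{k-1}} ∨ (\overline{K_a} ∪ K_{a_1}) with parameters satisfying 3 ≤ a_1 ≤ 2s+1 (a_1 odd), 1 ≤ b_i ≤ s for all i, ∑ b_i ≤ s, and a ≥ 4s² + 6s − 1. Then the spectral radius of G̃ is strictly greater than a_1. -/
open Finset

/-- The join `G ∨ H` of two graphs on disjoint vertex sets. -/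
def joinGraph {α β : Type*} (G : SimpleGraph α) (H : SimpleGraph β) :
    SimpleGraph (α ⊕ β) where
  Adj x y :=
    match x, y with
    | Sum.inl a, Sum.inl a' => G.Adj a a'
    | Sum.inr b, Sum.inr b' => H.Adj b b'
    | _, _ => True
  symm := by constructor; rintro (a | b) (a' | b') h
             · exact h.symm
             · trivial
             · trivial
             · exact h.symm
  loopless := by constructor; rintro (a | b) h
                 · exact G.loopless.irrefl a h
                 · exact H.loopless.irrefl b h

/-- The disjoint union `G ∪ H` of two graphs. -/
def unionGraph {α β : Type*} (G : SimpleGraph α) (H : SimpleGraph β) :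
    SimpleGraph (α ⊕ β) where
  Adj x y :=
    match x, y with
    | Sum.inl a, Sum.inl a' => G.Adj a a'
    | Sum.inr b, Sum.inr b' => H.Adj b b'
    | _, _ => False
  symm := by constructor; rintro (a | b) (a' | b') h
             · exact h.symm
             · exact h.elim
             · exact h.elim
             · exact h.symm
  loopless := by constructor; rintro (a | b) h
                 · exact G.loopless.irrefl a h
                 · exact H.loopless.irrefl b h

/-- `Gtilde b a a₁ = K_{b 1, …, b (k-1)} ∨ (∁K_a ∪ K_{a₁})`: the join of a complete
multipartite graph with the disjoint union of an independent set of size `a`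
and a clique of size `a₁`. -/
def Gtilde {m : ℕ} (b : Fin m → ℕ) (a a₁ : ℕ) :
    SimpleGraph ((Σ i : Fin m, Fin (b i)) ⊕ (Fin a ⊕ Fin a₁)) :=
  joinGraph (SimpleGraph.completeMultipartiteGraph (fun i => Fin (b i)))
    (unionGraph (⊥ : SimpleGraph (Fin a)) (⊤ : SimpleGraph (Fin a₁)))

/-!
The spectral radius of a symmetric matrix dominates each of its Rayleigh quotients. Take the test
vector equal to `a₁` at one vertex `u` of the multipartite part and to `1` on the `a + a₁` vertices
of `∁K_a ∪ K_{a₁}`; since `u` is joined to all of them, the Rayleigh quotient of `G̃` exceeds `a₁`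
exactly when `(a₁ - 1)² < a`, and `a₁ ≤ 2s + 1` with `a ≥ 4s² + 6s - 1` give even `a₁² ≤ a`.
-/

open Matrix MatrixOrder

theorem lt_sSup_spectrum_of_mul_dotProduct_lt {n : Type*} [Fintype n] [DecidableEq n]
    {A : Matrix n n ℝ} (hA : A.IsHermitian) {x : n → ℝ} {c : ℝ}
    (h : c * (x ⬝ᵥ x) < x ⬝ᵥ A *ᵥ x) : c < sSup (spectrum ℝ A) := by
  by_contra! hc
  -- In the Loewner order, `A ≤ c • 1` as soon as the spectrum of `A` lies below `c`.
  have hle : A ≤ algebraMap ℝ (Matrix n n ℝ) c :=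
    (le_algebraMap_iff_spectrum_le hA.isSelfAdjoint).2 fun μ hμ =>
      (le_csSup A.finite_real_spectrum.bddAbove hμ).trans hc
  have hx := (le_iff.1 hle).dotProduct_mulVec_nonneg x
  simp only [Algebra.algebraMap_eq_smul_one, sub_mulVec, smul_mulVec, one_mulVec,
    dotProduct_sub, dotProduct_smul, star_trivial, smul_eq_mul, sub_nonneg] at hx
  linarith

section
variable {V : Type*} [Fintype V] [DecidableEq V]

theorem adjMat_eq (G : SimpleGraph V) [DecidableRel G.Adj] : adjMat G = G.adjMatrix ℝ := by
  unfold adjMat; congr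

theorem lt_specRad_of_mul_dotProduct_lt (G : SimpleGraph V) {x : V → ℝ} {c : ℝ}
    (h : c * (x ⬝ᵥ x) < x ⬝ᵥ adjMat G *ᵥ x) : c < specRad G := by
  classical
  exact lt_sSup_spectrum_of_mul_dotProduct_lt (adjMat_eq G ▸ G.isHermitian_adjMatrix ℝ) h

theorem adjMat_bot : adjMat (⊥ : SimpleGraph V) = 0 := by
  simp only [adjMat_eq, SimpleGraph.adjMatrix_bot]

theorem one_dotProduct_adjMat_top_mulVec_one :
    1 ⬝ᵥ adjMat (⊤ : SimpleGraph V) *ᵥ 1 = Fintype.card V * (Fintype.card V - 1 : ℝ) := by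
  rw [adjMat_eq, SimpleGraph.adjMatrix_completeGraph_eq_of_one_sub_one,
    sub_mulVec, one_mulVec, dotProduct_sub]
  simp only [dotProduct, Pi.one_apply, mulVec, of_apply, mul_one, sum_const, card_univ,
    nsmul_eq_mul, one_mul]
  ring

end

section
variable {α β : Type*} [Fintype α] [DecidableEq α] [Fintype β] [DecidableEq β]

theorem adjMat_joinGraph (G : SimpleGraph α) (H : SimpleGraph β) :
    adjMat (joinGraph G H) =
      fromBlocks (adjMat G) (of fun _ _ => 1) (of fun _ _ => 1) (adjMat H) := by
  classical
  ext (v | v) (w | w) <;> simp [adjMat_eq, joinGraph]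

theorem adjMat_unionGraph (G : SimpleGraph α) (H : SimpleGraph β) :
    adjMat (unionGraph G H) = fromBlocks (adjMat G) 0 0 (adjMat H) := by
  classical
  ext (v | v) (w | w) <;> simp [adjMat_eq, unionGraph]

theorem one_dotProduct_adjMat_unionGraph_mulVec_one (G : SimpleGraph α) (H : SimpleGraph β) :
    1 ⬝ᵥ adjMat (unionGraph G H) *ᵥ 1 = 1 ⬝ᵥ adjMat G *ᵥ 1 + 1 ⬝ᵥ adjMat H *ᵥ 1 := by
  rw [adjMat_unionGraph, ← Sum.elim_one_one, fromBlocks_mulVec, sumElim_dotProduct_sumElim]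
  simp

theorem dotProduct_adjMat_joinGraph_mulVec (G : SimpleGraph α) (H : SimpleGraph β) (u : α)
    (t : ℝ) (z : β → ℝ) :
    Sum.elim (Pi.single u t) z ⬝ᵥ adjMat (joinGraph G H) *ᵥ Sum.elim (Pi.single u t) z =
      2 * t * ∑ v, z v + z ⬝ᵥ adjMat H *ᵥ z := by
  rw [adjMat_joinGraph, fromBlocks_mulVec, sumElim_dotProduct_sumElim]
  have hdiag : adjMat G u u = 0 := by classical simp [adjMat_eq]
  simp only [dotProduct, Pi.single_apply, Sum.elim_comp_inl, mulVec_single, op_smul_eq_smul,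
    Sum.elim_comp_inr, Pi.add_apply, Pi.smul_apply, col_apply, smul_eq_mul, mulVec, of_apply,
    one_mul, mul_add, ite_mul, zero_mul, sum_add_distrib, sum_ite_eq', mem_univ, ↓reduceIte,
    hdiag, mul_zero, zero_add, mul_one, ← sum_mul]
  ring

theorem lt_specRad_joinGraph (G : SimpleGraph α) (H : SimpleGraph β) (u : α) {t c : ℝ}
    (h : c * (t ^ 2 + Fintype.card β) < 2 * t * Fintype.card β + 1 ⬝ᵥ adjMat H *ᵥ 1) :
    c < specRad (joinGraph G H) := by
  refine lt_specRad_of_mul_dotProduct_lt _ (x := Sum.elim (Pi.single u t) 1) ?_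
  rw [dotProduct_adjMat_joinGraph_mulVec, sumElim_dotProduct_sumElim]
  simpa only [dotProduct_single, Pi.single_eq_same, one_dotProduct_one, Pi.one_apply, sum_const,
    card_univ, nsmul_eq_mul, mul_one, sq] using h

end

theorem a1_lt_specRad_Gtilde_general (k s a a₁ : ℕ) (hk : 2 ≤ k) (b : Fin (k - 1) → ℕ)
    (ha₁ : 3 ≤ a₁) (ha₁' : a₁ ≤ 2 * s + 1)
    (hb : ∀ i, 1 ≤ b i ∧ b i ≤ s)
    (ha : 4 * s ^ 2 + 6 * s - 1 ≤ a) :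
    (a₁ : ℝ) < specRad (Gtilde b a a₁) := by
  have hsq : a₁ ^ 2 ≤ a := by
    have h1 : a₁ ^ 2 ≤ (2 * s + 1) ^ 2 := Nat.pow_le_pow_left ha₁' 2
    have h2 : (2 * s + 1) ^ 2 = 4 * s ^ 2 + 4 * s + 1 := by ring
    omega
  let i₀ : Fin (k - 1) := ⟨0, by omega⟩
  refine lt_specRad_joinGraph _ _ ⟨i₀, ⟨0, (hb i₀).1⟩⟩ (t := a₁) ?_
  rw [one_dotProduct_adjMat_unionGraph_mulVec_one, one_dotProduct_adjMat_top_mulVec_one]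
  simp only [Fintype.card_sum, Fintype.card_fin, Nat.cast_add, adjMat_bot, zero_mulVec,
    dotProduct_zero, zero_add]
  have hsq' : (a₁ : ℝ) ^ 2 ≤ a := by exact_mod_cast hsq
  have ha₁3 : (3 : ℝ) ≤ a₁ := by exact_mod_cast ha₁
  have hgap : 0 < (a₁ : ℝ) * (a - (a₁ - 1) ^ 2) := mul_pos (by linarith) (by nlinarith)
  linarith

/-- For `G̃ = K_{b_1,…,b_{k-1}} ∨ (∁K_a ∪ K_{a₁})` with `3 ≤ a₁ ≤ 2s + 1` odd,
`1 ≤ b i ≤ s`, `∑ b i ≤ s` and `a ≥ 4s² + 6s - 1`, the spectral radius of `G̃`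
is strictly greater than `a₁`. -/
theorem a1_lt_specRad_Gtilde (k s a a₁ : ℕ) (hk : 2 ≤ k) (b : Fin (k - 1) → ℕ)
    (ha₁ : 3 ≤ a₁) (ha₁' : a₁ ≤ 2 * s + 1) (hodd : Odd a₁)
    (hb : ∀ i, 1 ≤ b i ∧ b i ≤ s) (hbsum : ∑ i, b i ≤ s)
    (ha : 4 * s ^ 2 + 6 * s - 1 ≤ a) :
    (a₁ : ℝ) < specRad (Gtilde b a a₁) :=
  a1_lt_specRad_Gtilde_general k s a a₁ hk b ha₁ ha₁' hb ha
end
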